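/- arXiv:2206.05062 — 6 statements merged into one kernel-verified Lean document; each statement's English description precedes it below -/
import Mathlib

section
/- For all nonnegative integers n, m, p: P(n,m,p) = Σ_{k=0}^{⌊n/2⌋} Σ_{l=0}^{⌊m/2⌋} Q(n−2k, m−2l, p) · P(k, l, p). -/
/-- `P n m p` : number of integer partitions of `n` into exactly `m` parts
with each part at most `p`. -/
def P (n m p : ℕ) : ℕ :=
  Fintype.card {π : n.Partition // π.parts.card = m ∧ ∀ i ∈ π.parts, i ≤ p}

/-- `Q n m p` : number of integer partitions of `n` into exactly `m` distinct parts
with each part at most `p`. -/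
def Q (n m p : ℕ) : ℕ :=
  Fintype.card {π : n.Partition // π.parts.card = m ∧ π.parts.Nodup ∧ ∀ i ∈ π.parts, i ≤ p}

/-!
Every multiset `s` splits uniquely as `d + 2 • t` with `d` duplicate-free: an element of
multiplicity `c` in `s` occurs `c % 2` times in `d` and `c / 2` times in `t`. Applied to the
parts of a partition of `n` into `m` parts, this is a bijection onto pairs of a partition of
`n - 2k` into `m - 2l` distinct parts and a partition of `k` into `l` parts, where `k` and `l` are
the sum and number of parts of `t`; the part bound `p` is preserved both ways.
-/

open Finset

namespace Multiset

variable {α : Type*} [DecidableEq α]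

def oddPart (s : Multiset α) : Multiset α :=
  s.dedup.filter fun a => s.count a % 2 = 1

def halfPart (s : Multiset α) : Multiset α :=
  ∑ a ∈ s.toFinset, replicate (s.count a / 2) a

theorem count_oddPart (s : Multiset α) (a : α) : (oddPart s).count a = s.count a % 2 := by
  rw [oddPart, count_filter, count_dedup]
  by_cases ha : a ∈ s
  · have := Nat.mod_two_eq_zero_or_one (s.count a)
    split_ifs <;> omega
  · simp [ha]

theorem count_halfPart (s : Multiset α) (a : α) : (halfPart s).count a = s.count a / 2 := by
  simp only [halfPart, count_sum', count_replicate, Finset.sum_ite_eq', mem_toFinset]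
  split_ifs with ha
  · rfl
  · simp [count_eq_zero_of_notMem ha]

theorem nodup_oddPart (s : Multiset α) : (oddPart s).Nodup :=
  (nodup_dedup s).filter _

theorem oddPart_add_two_nsmul_halfPart (s : Multiset α) : oddPart s + 2 • halfPart s = s := by
  ext a
  rw [count_add, count_nsmul, count_oddPart, count_halfPart]
  exact Nat.mod_add_div _ _

theorem sum_oddPart_add_two_nsmul [AddCommMonoid α] (s : Multiset α) :
    (oddPart s).sum + 2 • (halfPart s).sum = s.sum := by
  rw [← sum_nsmul, ← sum_add, oddPart_add_two_nsmul_halfPart]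

theorem card_oddPart_add_two_mul (s : Multiset α) :
    card (oddPart s) + 2 * card (halfPart s) = card s := by
  rw [← card_nsmul, ← card_add, oddPart_add_two_nsmul_halfPart]

theorem oddPart_le (s : Multiset α) : oddPart s ≤ s :=
  le_iff_count.2 fun a => (count_oddPart s a).trans_le (Nat.mod_le _ _)

theorem halfPart_le (s : Multiset α) : halfPart s ≤ s :=
  le_iff_count.2 fun a => (count_halfPart s a).trans_le (Nat.div_le_self _ _)

theorem oddPart_add_two_nsmul {d : Multiset α} (hd : d.Nodup) (t : Multiset α) :
    oddPart (d + 2 • t) = d := by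
  ext a
  have := nodup_iff_count_le_one.mp hd a
  rw [count_oddPart, count_add, count_nsmul]
  omega

theorem halfPart_add_two_nsmul {d : Multiset α} (hd : d.Nodup) (t : Multiset α) :
    halfPart (d + 2 • t) = t := by
  ext a
  have := nodup_iff_count_le_one.mp hd a
  rw [count_halfPart, count_add, count_nsmul]
  omega

end Multiset

namespace Nat.Partition

def ofLE {n k : ℕ} (π : n.Partition) {s : Multiset ℕ} (hs : s ≤ π.parts)
    (hsum : s.sum = k) : k.Partition where
  parts := s
  parts_pos hi := π.parts_pos (Multiset.mem_of_le hs hi)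
  parts_sum := hsum

def addTwoNsmul {m k n : ℕ} (σ : m.Partition) (τ : k.Partition) (h : m + 2 * k = n) :
    n.Partition where
  parts := σ.parts + 2 • τ.parts
  parts_pos hi := by
    rcases Multiset.mem_add.1 hi with hi | hi
    · exact σ.parts_pos hi
    · exact τ.parts_pos (Multiset.mem_of_mem_nsmul hi)
  parts_sum := by
    rw [Multiset.sum_add, Multiset.sum_nsmul, σ.parts_sum, τ.parts_sum, smul_eq_mul, h]

end Nat.Partition

def boundedPartitions (n m p : ℕ) : Finset n.Partition :=
  {π | Multiset.card π.parts = m ∧ ∀ i ∈ π.parts, i ≤ p}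

def distinctBoundedPartitions (n m p : ℕ) : Finset n.Partition :=
  {π | Multiset.card π.parts = m ∧ π.parts.Nodup ∧ ∀ i ∈ π.parts, i ≤ p}

@[simp]
theorem mem_boundedPartitions {n m p : ℕ} (π : n.Partition) :
    π ∈ boundedPartitions n m p ↔
      Multiset.card π.parts = m ∧ ∀ i ∈ π.parts, i ≤ p := by
  simp [boundedPartitions]

@[simp]
theorem mem_distinctBoundedPartitions {n m p : ℕ} (π : n.Partition) :
    π ∈ distinctBoundedPartitions n m p ↔
      Multiset.card π.parts = m ∧ π.parts.Nodup ∧ ∀ i ∈ π.parts, i ≤ p := by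
  simp [distinctBoundedPartitions]

theorem P_eq_card (n m p : ℕ) : P n m p = #(boundedPartitions n m p) :=
  Fintype.card_subtype _

theorem Q_eq_card (n m p : ℕ) : Q n m p = #(distinctBoundedPartitions n m p) :=
  Fintype.card_subtype _

theorem Nat.Partition.addTwoNsmul_mem_boundedPartitions {m k n a b p : ℕ} {σ : m.Partition}
    {τ : k.Partition} (h : m + 2 * k = n) (hσ : σ ∈ boundedPartitions m a p)
    (hτ : τ ∈ boundedPartitions k b p) :
    σ.addTwoNsmul τ h ∈ boundedPartitions n (a + 2 * b) p := by
  rw [mem_boundedPartitions] at hσ hτ ⊢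
  refine ⟨by simp [addTwoNsmul, hσ.1, hτ.1], fun i hi => ?_⟩
  rcases Multiset.mem_add.1 hi with hi | hi
  · exact hσ.2 i hi
  · exact hτ.2 i (Multiset.mem_of_mem_nsmul hi)

def halfPartSumCard {n : ℕ} (π : n.Partition) : ℕ × ℕ :=
  ((Multiset.halfPart π.parts).sum, Multiset.card (Multiset.halfPart π.parts))

theorem halfPartSumCard_mem_range_product {n m p : ℕ} {π : n.Partition}
    (hπ : π ∈ boundedPartitions n m p) :
    halfPartSumCard π ∈ range (n / 2 + 1) ×ˢ range (m / 2 + 1) := by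
  have hsum := Multiset.sum_oddPart_add_two_nsmul π.parts
  have hcard := Multiset.card_oddPart_add_two_mul π.parts
  rw [π.parts_sum, smul_eq_mul] at hsum
  rw [((mem_boundedPartitions π).1 hπ).1] at hcard
  simp only [halfPartSumCard, mem_product, mem_range]
  omega

open Multiset (oddPart halfPart) in
theorem card_filter_halfPartSumCard_eq {n m p k l : ℕ} (hk : 2 * k ≤ n) (hl : 2 * l ≤ m) :
    #{π ∈ boundedPartitions n m p | halfPartSumCard π = (k, l)} =
      Q (n - 2 * k) (m - 2 * l) p * P k l p := by
  rw [Q_eq_card, P_eq_card, ← card_product]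
  have sum_oddPart (π : n.Partition) (h : (halfPart π.parts).sum = k) :
      (oddPart π.parts).sum = n - 2 * k := by
    have := Multiset.sum_oddPart_add_two_nsmul π.parts
    rw [π.parts_sum, smul_eq_mul, h] at this
    omega
  simp only [halfPartSumCard, Prod.mk.injEq]
  refine card_bij'
    (fun π hπ => (π.ofLE (Multiset.oddPart_le _) (sum_oddPart π (mem_filter.1 hπ).2.1),
      π.ofLE (Multiset.halfPart_le _) (mem_filter.1 hπ).2.1))
    (fun στ _ => στ.1.addTwoNsmul στ.2 (by omega)) ?_ ?_ ?_ ?_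
  · intro π hπ
    simp only [mem_filter, mem_boundedPartitions] at hπ
    obtain ⟨⟨hm, hp⟩, -, rfl⟩ := hπ
    have := Multiset.card_oddPart_add_two_mul π.parts
    simp only [mem_product, mem_distinctBoundedPartitions, mem_boundedPartitions]
    refine ⟨⟨?_, Multiset.nodup_oddPart _,
        fun i hi => hp i (Multiset.mem_of_le (Multiset.oddPart_le _) hi)⟩,
      rfl, fun i hi => hp i (Multiset.mem_of_le (Multiset.halfPart_le _) hi)⟩
    simp only [Nat.Partition.ofLE]
    omega
  · rintro ⟨σ, τ⟩ hστ
    obtain ⟨hσ, hτ⟩ := mem_product.1 hστ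
    obtain ⟨hσm, hσd, hσp⟩ := (mem_distinctBoundedPartitions σ).1 hσ
    refine mem_filter.2 ⟨?_, ?_⟩
    · have := Nat.Partition.addTwoNsmul_mem_boundedPartitions (n := n) (by omega)
        ((mem_boundedPartitions σ).2 ⟨hσm, hσp⟩) hτ
      rwa [Nat.sub_add_cancel hl] at this
    · simp only [Nat.Partition.addTwoNsmul, Multiset.halfPart_add_two_nsmul hσd]
      exact ⟨τ.parts_sum, ((mem_boundedPartitions τ).1 hτ).1⟩
  · intro π _
    exact Nat.Partition.ext (Multiset.oddPart_add_two_nsmul_halfPart π.parts)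
  · rintro ⟨σ, τ⟩ hστ
    have hσd : σ.parts.Nodup :=
      ((mem_distinctBoundedPartitions σ).1 (mem_product.1 hστ).1).2.1
    exact Prod.ext (Nat.Partition.ext (Multiset.oddPart_add_two_nsmul hσd _))
      (Nat.Partition.ext (Multiset.halfPart_add_two_nsmul hσd _))

theorem stmt_0 (n m p : ℕ) :
    P n m p = ∑ k ∈ Finset.range (n / 2 + 1), ∑ l ∈ Finset.range (m / 2 + 1),
      Q (n - 2 * k) (m - 2 * l) p * P k l p := by
  rw [P_eq_card, card_eq_sum_card_fiberwise fun _ => halfPartSumCard_mem_range_product,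
    sum_product]
  refine sum_congr rfl fun k hk => sum_congr rfl fun l hl => ?_
  rw [mem_range] at hk hl
  exact card_filter_halfPartSumCard_eq (by omega) (by omega)
end

section
/- For every nonnegative integer n: Q(n) = Σ_{k=0}^{⌊n/2⌋} Σ_{l=0}^{⌊n/2⌋} (−1)^l · P(n−2k) · Q(k,l), where Q(k,l) is the number of partitions of k into exactly l distinct parts. -/
/-- `P1 n` : number of integer partitions of `n`. -/
def P1 (n : ℕ) : ℕ := Fintype.card n.Partition

/-- `Q1 n` : number of integer partitions of `n` into distinct parts. -/
def Q1 (n : ℕ) : ℕ := Fintype.card {π : n.Partition // π.parts.Nodup}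

/-- `Q2 n m` : number of integer partitions of `n` into exactly `m` distinct parts. -/
def Q2 (n m : ℕ) : ℕ :=
  Fintype.card {π : n.Partition // π.parts.card = m ∧ π.parts.Nodup}

/-!
Let `D(X) = ∏ (1 - X^i) = ∑ₖ (∑ₗ (-1)^l Q(k,l)) X^k`. Since `P(X) = ∏ 1/(1 - X^i)` and
`Q(X) = ∏ (1 + X^i)`, we have `P(X) D(X) = 1` and `Q(X) D(X) = ∏ (1 - X^(2i)) = D(X²)`, hence
`Q(X) = D(X²) P(X)`. Comparing coefficients of `X^n` gives the identity, the inner sum stopping at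
`l = n/2` because a partition of `k` has at most `k` parts.
-/

open PowerSeries PowerSeries.WithPiTopology Finset

theorem Nat.Partition.card_parts_le {n : ℕ} (p : n.Partition) : p.parts.card ≤ n := by
  simpa [← p.parts_sum] using Multiset.card_nsmul_le_sum (s := p.parts) (a := 1)
    fun _ hi => p.parts_pos hi

theorem PowerSeries.continuous_expand {R : Type*} [CommRing R] [TopologicalSpace R] (p : ℕ)
    (hp : p ≠ 0) : Continuous (expand p hp : R⟦X⟧ → R⟦X⟧) := by
  refine continuous_pi fun d => ?_
  rw [Finsupp.unique_single d]
  change Continuous fun φ => coeff (d default) (expand p hp φ)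
  simp_rw [coeff_expand]
  split_ifs
  · exact continuous_coeff R _
  · exact continuous_const

theorem PowerSeries.coeff_expand_mul_eq_sum {R : Type*} [CommRing R] (p : ℕ) (hp : p ≠ 0)
    (φ ψ : R⟦X⟧) (n : ℕ) :
    coeff n (expand p hp φ * ψ) =
      ∑ k ∈ range (n / p + 1), coeff k φ * coeff (n - p * k) ψ := by
  have hp' : 0 < p := Nat.pos_of_ne_zero hp
  have multiples : (range (n + 1)).filter (p ∣ ·) = (range (n / p + 1)).image (p * ·) := by
    ext a
    simp only [mem_filter, mem_range, mem_image, Nat.lt_succ_iff, Nat.le_div_iff_mul_le hp']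
    constructor
    · rintro ⟨ha, k, rfl⟩
      exact ⟨k, by linarith, rfl⟩
    · rintro ⟨k, hk, rfl⟩
      exact ⟨by linarith, dvd_mul_right p k⟩
  rw [coeff_mul,
    Nat.sum_antidiagonal_eq_sum_range_succ fun a b => coeff a (expand p hp φ) * coeff b ψ]
  simp_rw [coeff_expand, ite_mul, zero_mul]
  rw [← sum_filter, multiples, sum_image fun a _ b _ h => Nat.eq_of_mul_eq_mul_left hp' h]
  simp_rw [Nat.mul_div_cancel_left _ hp']

noncomputable def signedDistinctsGenFun : ℤ⟦X⟧ :=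
  Nat.Partition.genFun fun _ c => if c = 1 then -1 else 0

theorem hasProd_signedDistinctsGenFun :
    HasProd (fun i => 1 - X ^ (i + 1)) signedDistinctsGenFun := by
  convert! Nat.Partition.hasProd_genFun (R := ℤ) (fun _ c => if c = 1 then -1 else 0) using 1
  ext1 i
  rw [tsum_eq_single 0]
  · simp [smul_eq_C_mul, sub_eq_add_neg]
  · intro j hj
    simp [hj, smul_eq_C_mul]

theorem coeff_signedDistinctsGenFun (k : ℕ) :
    coeff k signedDistinctsGenFun =
      ∑ p ∈ Nat.Partition.distincts k, (-1 : ℤ) ^ p.parts.card := by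
  rw [signedDistinctsGenFun, Nat.Partition.coeff_genFun, Nat.Partition.distincts, sum_filter]
  refine sum_congr rfl fun p _ => ?_
  rw [Finsupp.prod, Multiset.toFinsupp_support, prod_ite_zero]
  simp only [Multiset.toFinsupp_apply, Multiset.mem_toFinset, ← Multiset.nodup_iff_count_eq_one,
    prod_const]
  split_ifs with h
  · rw [Multiset.toFinset_card_of_nodup h]
  · rfl

theorem coeff_signedDistinctsGenFun_eq_sum_Q2 {k m : ℕ} (hk : k ≤ m) :
    coeff k signedDistinctsGenFun = ∑ l ∈ range (m + 1), (-1 : ℤ) ^ l * Q2 k l := by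
  rw [coeff_signedDistinctsGenFun, ← sum_fiberwise_of_maps_to (g := fun p => p.parts.card)
    (t := range (m + 1)) fun p _ => mem_range_succ_iff.2 (p.card_parts_le.trans hk)]
  refine sum_congr rfl fun l _ => ?_
  rw [sum_congr rfl fun p hp => by rw [(mem_filter.1 hp).2], sum_const, nsmul_eq_mul, mul_comm,
    Q2, Fintype.card_subtype, Nat.Partition.distincts, filter_filter]
  simp only [and_comm]

theorem hasProd_mk_P1 :
    HasProd (fun i => ∑' j, X ^ ((i + 1) * j)) (mk fun n => (P1 n : ℤ)) := by
  simpa [Nat.Partition.restricted, P1] using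
    Nat.Partition.hasProd_powerSeriesMk_card_restricted ℤ fun _ => True

theorem hasProd_mk_Q1 : HasProd (fun i => 1 + X ^ (i + 1)) (mk fun n => (Q1 n : ℤ)) := by
  have h := Nat.Partition.hasProd_powerSeriesMk_card_countRestricted ℤ two_pos
  simp_rw [Nat.Partition.countRestricted_two] at h
  simpa [Q1, Fintype.card_subtype, Nat.Partition.distincts, sum_range, Fin.sum_univ_two] using h

theorem mk_P1_mul_signedDistinctsGenFun :
    mk (fun n => (P1 n : ℤ)) * signedDistinctsGenFun = 1 := by
  refine (hasProd_mk_P1.mul hasProd_signedDistinctsGenFun).unique ?_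
  convert hasProd_one with i
  simp_rw [pow_mul]
  exact tsum_pow_mul_one_sub_of_constantCoeff_eq_zero (by simp)

theorem mk_Q1_mul_signedDistinctsGenFun :
    mk (fun n => (Q1 n : ℤ)) * signedDistinctsGenFun =
      expand 2 two_ne_zero signedDistinctsGenFun := by
  refine (hasProd_mk_Q1.mul hasProd_signedDistinctsGenFun).unique ?_
  convert hasProd_signedDistinctsGenFun.map _ (continuous_expand 2 two_ne_zero) using 1
  ext1 i
  simp only [Function.comp_apply, map_sub, map_one, map_pow, expand_X]
  ring

theorem mk_Q1_eq_expand_mul_mk_P1 :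
    mk (fun n => (Q1 n : ℤ)) =
      expand 2 two_ne_zero signedDistinctsGenFun * mk fun n => (P1 n : ℤ) := by
  rw [← mk_Q1_mul_signedDistinctsGenFun, mul_assoc, mul_comm signedDistinctsGenFun,
    mk_P1_mul_signedDistinctsGenFun, mul_one]

theorem stmt_5 (n : ℕ) :
    (Q1 n : ℤ) = ∑ k ∈ Finset.range (n / 2 + 1), ∑ l ∈ Finset.range (n / 2 + 1),
      (-1 : ℤ) ^ l * P1 (n - 2 * k) * Q2 k l := by
  have h := congrArg (coeff n) mk_Q1_eq_expand_mul_mk_P1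
  rw [coeff_mk, coeff_expand_mul_eq_sum] at h
  rw [h]
  refine sum_congr rfl fun k hk => ?_
  rw [coeff_signedDistinctsGenFun_eq_sum_Q2 (Nat.lt_succ_iff.1 (mem_range.1 hk)), coeff_mk, sum_mul]
  exact sum_congr rfl fun l _ => by ring
end

section
/- For all nonnegative integers n, m, p, the following identity holds in ℝ: Σ_{k=0}^{⌊n/3⌋} Σ_{l=0}^{⌊m/3⌋} (−1)^l · P(n−3k, m−3l, p) · Q(k, l, p) = Σ_{k=0}^{n} Σ_{l=0}^{m} cos((2l−m)π/3) · Q(n−k, m−l, p) · Q(k, l, p). -/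
/-!
Let `x` mark the size of a partition and `y` its number of parts. Then
`∑ P(n,m,p) xⁿ yᵐ = ∏_{i ≤ p} (1 - y xⁱ)⁻¹` and `∑ wᵐ Q(n,m,p) xⁿ yᵐ = ∏_{i ≤ p} (1 + w y xⁱ)`.
If `a + b = 1` and `a b = 1`, as for `a = e^{iπ/3}`, `b = e^{-iπ/3}`, then
`(1 - t)(1 + a t)(1 + b t) = 1 - t³`, hence
`∏ (1 - y xⁱ)⁻¹ · ∏ (1 - y³ x³ⁱ) = ∏ (1 + a y xⁱ) · ∏ (1 + b y xⁱ)`.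
Comparing coefficients of `xⁿ yᵐ` gives the identity, `cos((2l - m)π/3)` being the real part
of `aˡ bᵐ⁻ˡ`.
-/

open Finset PowerSeries PowerSeries.WithPiTopology
open scoped Polynomial

theorem Q_eq_card_filter_powerset (n m p : ℕ) :
    Q n m p = #{T ∈ (Icc 1 p).powerset | ∑ i ∈ T, i = n ∧ #T = m} := by
  rw [Q, Fintype.card_subtype]
  refine card_bij' (fun π hπ ↦ ⟨π.parts, (mem_filter.mp hπ).2.2.1⟩)
    (fun T hT ↦ ⟨T.val, fun hi ↦ ?_, ?_⟩) (fun π hπ ↦ ?_) (fun T hT ↦ ?_)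
    (fun π _ ↦ Nat.Partition.ext rfl) (fun T _ ↦ rfl)
  · exact (mem_Icc.mp (mem_powerset.mp (mem_filter.mp hT).1 hi)).1
  · exact (sum_val T).trans (mem_filter.mp hT).2.1
  · obtain ⟨-, hcard, -, hle⟩ := mem_filter.mp hπ
    refine mem_filter.mpr ⟨mem_powerset.mpr fun i hi ↦ mem_Icc.mpr ⟨π.parts_pos hi, hle i hi⟩,
      (sum_val _).symm.trans π.parts_sum, hcard⟩
  · obtain ⟨hsub, -, hcard⟩ := mem_filter.mp hT
    exact mem_filter.mpr ⟨mem_univ _, hcard, T.nodup,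
      fun i hi ↦ (mem_Icc.mp (mem_powerset.mp hsub hi)).2⟩

theorem sum_powerset_Icc_eq_sum_Q {M : Type*} [AddCommMonoid M] (p K L : ℕ) (g : ℕ → ℕ → M)
    (hg : ∀ k l, K < k ∨ L < l → g k l = 0) :
    ∑ T ∈ (Icc 1 p).powerset, g (∑ i ∈ T, i) #T =
      ∑ k ∈ range (K + 1), ∑ l ∈ range (L + 1), Q k l p • g k l := by
  let box := range (K + 1) ×ˢ range (L + 1)
  let shape (T : Finset ℕ) : ℕ × ℕ := (∑ i ∈ T, i, #T)
  have houtside : ∀ T ∈ (Icc 1 p).powerset, shape T ∉ box → g (shape T).1 (shape T).2 = 0 :=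
    fun T _ hT ↦ hg _ _ (by simp [box] at hT; omega)
  rw [← sum_product', ← sum_filter_of_ne fun T hT h ↦ not_not.mp fun hb ↦ h (houtside T hT hb),
    ← sum_fiberwise_eq_sum_filter' _ box shape fun x ↦ g x.1 x.2]
  refine sum_congr rfl fun x _ ↦ ?_
  rw [sum_const, Q_eq_card_filter_powerset]
  simp [shape, Prod.ext_iff]

theorem Nat.Partition.genFun_eq_prod_Icc {R : Type*} [CommSemiring R] [TopologicalSpace R]
    [T2Space R] (f : ℕ → ℕ → R) (p : ℕ) (hf : ∀ i c, p < i → f i c = 0) :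
    genFun f = ∏ i ∈ Icc 1 p, (1 + ∑' j, f i (j + 1) • X ^ (i * (j + 1))) := by
  refine ((hasProd_genFun f).unique
    (hasProd_prod_of_ne_finset_one (s := range p) fun i hi ↦ ?_)).trans ?_
  · simp [hf (i + 1) _ (by simpa using hi)]
  · rw [range_eq_Ico, prod_Ico_add' (fun i ↦ 1 + ∑' j, f i (j + 1) • (X : R⟦X⟧) ^ (i * (j + 1)))]
    rfl

variable {R : Type*} [CommRing R]

noncomputable def boundedPartsGenFun (p : ℕ) : R[X]⟦X⟧ :=
  Nat.Partition.genFun fun i c ↦ if i ≤ p then Polynomial.X ^ c else 0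

theorem coeff_coeff_boundedPartsGenFun (n m p : ℕ) :
    (coeff n (boundedPartsGenFun p : R[X]⟦X⟧)).coeff m = P n m p := by
  have hterm (π : n.Partition) :
      π.parts.toFinsupp.prod (fun i c ↦ if i ≤ p then (Polynomial.X : R[X]) ^ c else 0) =
        if ∀ i ∈ π.parts, i ≤ p then Polynomial.X ^ π.parts.card else 0 := by
    simp only [Finsupp.prod, Multiset.toFinsupp_support, prod_ite_zero, Multiset.mem_toFinset,
      Multiset.toFinsupp_apply, prod_pow_eq_pow_sum, Multiset.toFinset_sum_count_eq]
  rw [boundedPartsGenFun, Nat.Partition.coeff_genFun, sum_congr rfl fun π _ ↦ hterm π,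
    Polynomial.finsetSum_coeff, P, Fintype.card_subtype]
  simp [apply_ite (Polynomial.coeff · m), Polynomial.coeff_X_pow, ← ite_and, sum_boole, eq_comm,
    and_comm]

theorem boundedPartsGenFun_mul_prod_one_sub (p : ℕ) :
    boundedPartsGenFun p * ∏ i ∈ Icc 1 p, (1 - monomial i (Polynomial.X : R[X])) = 1 := by
  -- Any T2 topology on the coefficients makes `genFun` an infinite product; take the discrete one.
  let _ : TopologicalSpace R[X] := ⊥
  have _ : DiscreteTopology R[X] := ⟨rfl⟩
  rw [boundedPartsGenFun, Nat.Partition.genFun_eq_prod_Icc _ p fun i c hi ↦ if_neg hi.not_ge,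
    ← prod_mul_distrib]
  refine prod_eq_one fun i hi ↦ ?_
  have hterm (j : ℕ) : C ((Polynomial.X : R[X]) ^ (j + 1)) * X ^ (i * (j + 1)) =
      monomial i Polynomial.X ^ (j + 1) := by
    rw [monomial_pow, monomial_eq_C_mul_X_pow, mul_comm i]
  have hconst : constantCoeff (monomial i (Polynomial.X : R[X])) = 0 := by
    rw [← coeff_zero_eq_constantCoeff_apply, coeff_monomial, if_neg (by grind)]
  simp only [if_pos (mem_Icc.mp hi).2, smul_eq_C_mul, hterm]
  rw [← pow_zero (monomial i Polynomial.X), ← tsum_eq_zero_add' ?_]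
  · exact tsum_pow_mul_one_sub_of_constantCoeff_eq_zero hconst
  · simpa only [pow_succ] using (summable_pow_of_constantCoeff_eq_zero hconst).mul_right _

theorem prod_one_add_monomial (s : Finset ℕ) (c : R) (e : ℕ) :
    ∏ i ∈ s, (1 + monomial (e * i) (Polynomial.C c * Polynomial.X ^ e) : R[X]⟦X⟧) =
      ∑ T ∈ s.powerset,
        monomial (e * ∑ i ∈ T, i) (Polynomial.C (c ^ #T) * Polynomial.X ^ (e * #T)) := by
  rw [prod_one_add]
  refine sum_congr rfl fun T _ ↦ ?_
  rw [prod_monomial, ← Finset.mul_sum, prod_const, mul_pow, Polynomial.C_pow, ← pow_mul]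

theorem coeff_coeff_mul_monomial (F : R[X]⟦X⟧) (a b n m : ℕ) (c : R) :
    (coeff n (F * monomial a (Polynomial.C c * Polynomial.X ^ b))).coeff m =
      if a ≤ n ∧ b ≤ m then c * (coeff (n - a) F).coeff (m - b) else 0 := by
  rw [monomial_eq_C_mul_X_pow, ← mul_assoc, coeff_mul_X_pow', coeff_mul_C, mul_left_comm, ite_and]
  split_ifs <;> simp [Polynomial.coeff_C_mul, Polynomial.coeff_mul_X_pow', *]

noncomputable def distinctPartsGenFun (p : ℕ) (w : R) : R[X]⟦X⟧ :=
  ∏ i ∈ Icc 1 p, (1 + monomial i (Polynomial.C w * Polynomial.X))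

theorem coeff_coeff_distinctPartsGenFun (p : ℕ) (w : R) (n m : ℕ) :
    (coeff n (distinctPartsGenFun p w)).coeff m = w ^ m * Q n m p := by
  have hexpand := prod_one_add_monomial (Icc 1 p) w 1
  simp only [pow_one, one_mul] at hexpand
  rw [distinctPartsGenFun, hexpand, map_sum, Polynomial.finsetSum_coeff]
  simp only [coeff_monomial, apply_ite (Polynomial.coeff · m), Polynomial.coeff_C_mul_X_pow,
    Polynomial.coeff_zero, ← ite_and]
  rw [sum_powerset_Icc_eq_sum_Q p n m (fun k l ↦ if n = k ∧ m = l then w ^ l else 0)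
    fun k l h ↦ if_neg (by omega)]
  simp [ite_and, nsmul_eq_mul, mul_comm]

theorem boundedPartsGenFun_mul_prod_one_sub_cube {a b : R} (hadd : a + b = 1) (hmul : a * b = 1)
    (p : ℕ) :
    boundedPartsGenFun p * ∏ i ∈ Icc 1 p, (1 - monomial (3 * i) (Polynomial.X ^ 3 : R[X])) =
      distinctPartsGenFun p a * distinctPartsGenFun p b := by
  have hfactor (i : ℕ) : 1 - monomial (3 * i) (Polynomial.X ^ 3 : R[X]) =
      (1 - monomial i Polynomial.X) * ((1 + monomial i (Polynomial.C a * Polynomial.X)) *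
        (1 + monomial i (Polynomial.C b * Polynomial.X))) := by
    have hadd' : C (Polynomial.C a) + C (Polynomial.C b) = (1 : R[X]⟦X⟧) := by
      rw [← map_add, ← map_add, hadd, map_one, map_one]
    have hmul' : C (Polynomial.C a) * C (Polynomial.C b) = (1 : R[X]⟦X⟧) := by
      rw [← map_mul, ← map_mul, hmul, map_one, map_one]
    simp only [monomial_eq_C_mul_X_pow, map_mul, map_pow]
    linear_combination -(1 - C Polynomial.X * X ^ i) * (C Polynomial.X * X ^ i) * hadd'
      - (1 - C Polynomial.X * X ^ i) * (C Polynomial.X * X ^ i) ^ 2 * hmul'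
  rw [prod_congr rfl fun i _ ↦ hfactor i, prod_mul_distrib, ← mul_assoc,
    boundedPartsGenFun_mul_prod_one_sub, one_mul, distinctPartsGenFun, distinctPartsGenFun,
    prod_mul_distrib]

theorem coeff_coeff_boundedPartsGenFun_mul_prod_one_sub_cube (n m p : ℕ) :
    (coeff n (boundedPartsGenFun p *
      ∏ i ∈ Icc 1 p, (1 - monomial (3 * i) (Polynomial.X ^ 3 : R[X])))).coeff m =
      ∑ k ∈ range (n / 3 + 1), ∑ l ∈ range (m / 3 + 1),
        (-1 : R) ^ l * P (n - 3 * k) (m - 3 * l) p * Q k l p := by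
  have hfactor (i : ℕ) : 1 - monomial (3 * i) (Polynomial.X ^ 3 : R[X]) =
      1 + monomial (3 * i) (Polynomial.C (-1 : R) * Polynomial.X ^ 3) := by
    rw [map_neg, map_one, neg_one_mul, map_neg, sub_eq_add_neg]
  rw [prod_congr rfl fun i _ ↦ hfactor i, prod_one_add_monomial, mul_sum, map_sum,
    Polynomial.finsetSum_coeff]
  simp only [coeff_coeff_mul_monomial, coeff_coeff_boundedPartsGenFun]
  rw [sum_powerset_Icc_eq_sum_Q p (n / 3) (m / 3)
    (fun k l ↦ if 3 * k ≤ n ∧ 3 * l ≤ m then (-1) ^ l * (P (n - 3 * k) (m - 3 * l) p : R) else 0)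
    fun k l h ↦ if_neg (by omega)]
  refine sum_congr rfl fun k hk ↦ sum_congr rfl fun l hl ↦ ?_
  rw [if_pos (by simp at hk hl; omega), nsmul_eq_mul]
  ring

theorem coeff_coeff_distinctPartsGenFun_mul (p : ℕ) (a b : R) (n m : ℕ) :
    (coeff n (distinctPartsGenFun p a * distinctPartsGenFun p b)).coeff m =
      ∑ k ∈ range (n + 1), ∑ l ∈ range (m + 1),
        a ^ l * b ^ (m - l) * Q (n - k) (m - l) p * Q k l p := by
  rw [coeff_mul, Finset.Nat.sum_antidiagonal_eq_sum_range_succ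
    (fun i j ↦ coeff i (distinctPartsGenFun p a) * coeff j (distinctPartsGenFun p b)),
    Polynomial.finsetSum_coeff]
  refine sum_congr rfl fun k _ ↦ ?_
  rw [Polynomial.coeff_mul, Finset.Nat.sum_antidiagonal_eq_sum_range_succ
    (fun i j ↦ (coeff k (distinctPartsGenFun p a)).coeff i *
      (coeff (n - k) (distinctPartsGenFun p b)).coeff j)]
  refine sum_congr rfl fun l _ ↦ ?_
  rw [coeff_coeff_distinctPartsGenFun, coeff_coeff_distinctPartsGenFun]
  ring

theorem sum_neg_one_pow_mul_P_mul_Q {a b : R} (hadd : a + b = 1) (hmul : a * b = 1)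
    (n m p : ℕ) :
    ∑ k ∈ range (n / 3 + 1), ∑ l ∈ range (m / 3 + 1),
        (-1 : R) ^ l * P (n - 3 * k) (m - 3 * l) p * Q k l p =
      ∑ k ∈ range (n + 1), ∑ l ∈ range (m + 1),
        a ^ l * b ^ (m - l) * Q (n - k) (m - l) p * Q k l p := by
  rw [← coeff_coeff_boundedPartsGenFun_mul_prod_one_sub_cube,
    boundedPartsGenFun_mul_prod_one_sub_cube hadd hmul, coeff_coeff_distinctPartsGenFun_mul]

theorem Complex.re_exp_mul_I_pow_mul_exp_neg_mul_I_pow (θ : ℝ) {l m : ℕ} (hl : l ≤ m) :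
    (exp (θ * I) ^ l * exp (-θ * I) ^ (m - l)).re = Real.cos ((2 * l - m) * θ) := by
  rw [← exp_nat_mul, ← exp_nat_mul, ← exp_add, Nat.cast_sub hl]
  convert exp_ofReal_mul_I_re ((2 * l - m) * θ) using 3
  push_cast
  ring

theorem stmt_7 (n m p : ℕ) :
    ∑ k ∈ Finset.range (n / 3 + 1), ∑ l ∈ Finset.range (m / 3 + 1),
      (-1 : ℝ) ^ l * P (n - 3 * k) (m - 3 * l) p * Q k l p
    = ∑ k ∈ Finset.range (n + 1), ∑ l ∈ Finset.range (m + 1),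
      Real.cos ((2 * (l : ℝ) - m) * Real.pi / 3) * Q (n - k) (m - l) p * Q k l p := by
  set θ : ℝ := Real.pi / 3
  have hadd : Complex.exp (θ * Complex.I) + Complex.exp (-θ * Complex.I) = 1 := by
    rw [← Complex.two_cos, ← Complex.ofReal_cos, Real.cos_pi_div_three]
    norm_num
  have hmul : Complex.exp (θ * Complex.I) * Complex.exp (-θ * Complex.I) = 1 := by
    rw [← Complex.exp_add, ← add_mul, add_neg_cancel, zero_mul, Complex.exp_zero]
  have key := congrArg Complex.re (sum_neg_one_pow_mul_P_mul_Q hadd hmul n m p)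
  simp only [Complex.re_sum] at key
  refine (Eq.trans ?_ key).trans (sum_congr rfl fun k _ ↦ sum_congr rfl fun l hl ↦ ?_)
  · exact sum_congr rfl fun k _ ↦ sum_congr rfl fun l _ ↦ by norm_cast
  · rw [mul_div_assoc, ← Complex.re_exp_mul_I_pow_mul_exp_neg_mul_I_pow θ
      (by simpa [Nat.lt_succ_iff] using hl)]
    simp
end

section
/- For all nonnegative integers n, m, p: Σ_{k=0}^{⌊n/4⌋} Σ_{l=0}^{⌊m/4⌋} Q(n−4k, m−4l, p) · P(k, l, p) = Σ_{k=0}^{⌊n/2⌋} Σ_{l=0}^{⌊m/2⌋} (−1)^l · P(n−2k, m−2l, p) · P(k, l, p). -/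
/-!
In `ℤ[y]⟦x⟧` the series `F_P(x, y) = ∑ P(n, m, p) xⁿ yᵐ` is `∏_{i ≤ p} (1 - y xⁱ)⁻¹` and
`F_Q(x, y) = ∑ Q(n, m, p) xⁿ yᵐ` is `∏_{i ≤ p} (1 + y xⁱ)`. Since
`(1 + y xⁱ)(1 - y xⁱ)(1 + y² x²ⁱ) = 1 - y⁴ x⁴ⁱ`, both `F_Q(x, y) F_P(x⁴, y⁴)` and
`F_P(x, y) F_P(x², -y²)` are inverse to `∏_{i ≤ p} (1 - y xⁱ)(1 + y² x²ⁱ)`, hence equal;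
the theorem compares their coefficients of `xⁿ yᵐ`.
-/

open Finset PowerSeries Nat.Partition

theorem Finset.Nat.sum_antidiagonal_mul_ite_dvd {M : Type*} [NonUnitalNonAssocSemiring M]
    {d : ℕ} (hd : d ≠ 0) (N : ℕ) (f g : ℕ → M) :
    ∑ x ∈ antidiagonal N, f x.1 * (if d ∣ x.2 then g (x.2 / d) else 0)
      = ∑ j ∈ range (N / d + 1), f (N - d * j) * g j := by
  simp_rw [mul_ite, mul_zero]
  rw [← sum_filter]
  refine sum_nbij' (fun x ↦ x.2 / d) (fun j ↦ (N - d * j, d * j)) ?_ ?_ ?_ ?_ ?_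
  · simp only [mem_filter, HasAntidiagonal.mem_antidiagonal, mem_range, and_imp, Prod.forall]
    intro a b hab _
    exact Nat.lt_succ_of_le (Nat.div_le_div_right (by omega))
  · simp only [mem_filter, HasAntidiagonal.mem_antidiagonal, mem_range]
    intro j hj
    have := (Nat.mul_le_mul_left d (Nat.le_of_lt_succ hj)).trans (Nat.mul_div_le N d)
    exact ⟨by omega, dvd_mul_right d j⟩
  · simp only [mem_filter, HasAntidiagonal.mem_antidiagonal, and_imp, Prod.forall,
      Prod.mk.injEq]
    intro a b hab hb
    rw [Nat.mul_div_cancel' hb]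
    omega
  · intro j _
    simp [Nat.mul_div_cancel_left j (Nat.pos_of_ne_zero hd)]
  · simp only [mem_filter, HasAntidiagonal.mem_antidiagonal, and_imp, Prod.forall]
    intro a b hab hb
    rw [Nat.mul_div_cancel' hb, ← hab, Nat.add_sub_cancel]

theorem PowerSeries.coeff_mul_expand {R : Type*} [CommRing R] {d : ℕ} (hd : d ≠ 0)
    (F G : R⟦X⟧) (n : ℕ) :
    coeff n (F * expand d hd G) = ∑ k ∈ range (n / d + 1), coeff (n - d * k) F * coeff k G := by
  simp_rw [coeff_mul, coeff_expand]
  exact Finset.Nat.sum_antidiagonal_mul_ite_dvd hd n (fun a ↦ coeff a F) (fun b ↦ coeff b G)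

theorem Polynomial.coeff_mul_expand {R : Type*} [CommSemiring R] {d : ℕ} (hd : d ≠ 0)
    (f g : Polynomial R) (m : ℕ) :
    (f * expand R d g).coeff m = ∑ l ∈ range (m / d + 1), f.coeff (m - d * l) * g.coeff l := by
  simp_rw [coeff_mul, coeff_expand (Nat.pos_of_ne_zero hd)]
  exact Finset.Nat.sum_antidiagonal_mul_ite_dvd hd m _ _

/-- The coefficient of `xⁿ yᵐ` in `F(x, y) G(xᵈ, yᵈ)`, for `F G : R[y]⟦x⟧`. -/
theorem coeff_coeff_mul_expand_map_expand {R : Type*} [CommRing R] {d : ℕ} (hd : d ≠ 0)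
    (F G : (Polynomial R)⟦X⟧) (n m : ℕ) :
    (coeff n (F * expand d hd (map (Polynomial.expand R d).toRingHom G))).coeff m
      = ∑ k ∈ range (n / d + 1), ∑ l ∈ range (m / d + 1),
          (coeff (n - d * k) F).coeff (m - d * l) * (coeff k G).coeff l := by
  rw [PowerSeries.coeff_mul_expand, Polynomial.finsetSum_coeff]
  simp_rw [coeff_map, AlgHom.toRingHom_eq_coe, RingHom.coe_coe, Polynomial.coeff_mul_expand hd]

theorem Nat.Partition.map_genFun {R S : Type*} [CommSemiring R] [CommSemiring S] (φ : R →+* S)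
    (f : ℕ → ℕ → R) : map φ (genFun f) = genFun fun i c ↦ φ (f i c) := by
  ext n
  simp [map_sum, map_finsuppProd]

section GenFun

variable {R : Type*} [CommRing R]

noncomputable def boundedGenFun (w : R) (p : ℕ) : R⟦X⟧ :=
  genFun fun i c ↦ if i ≤ p then w ^ c else 0

noncomputable def distinctBoundedGenFun (w : R) (p : ℕ) : R⟦X⟧ :=
  genFun fun i c ↦ if i ≤ p ∧ c = 1 then w else 0

theorem coeff_boundedGenFun (w : R) (p n : ℕ) :
    coeff n (boundedGenFun w p)
      = ∑ π : n.Partition with ∀ i ∈ π.parts, i ≤ p, w ^ π.parts.card := by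
  rw [boundedGenFun, coeff_genFun, sum_filter]
  refine sum_congr rfl fun π _ ↦ ?_
  simp only [Finsupp.prod, Multiset.toFinsupp_support, Multiset.toFinsupp_apply, prod_ite_zero,
    Multiset.mem_toFinset, prod_pow_eq_pow_sum, Multiset.toFinset_sum_count_eq]

theorem coeff_distinctBoundedGenFun (w : R) (p n : ℕ) :
    coeff n (distinctBoundedGenFun w p)
      = ∑ π : n.Partition with π.parts.Nodup ∧ ∀ i ∈ π.parts, i ≤ p, w ^ π.parts.card := by
  rw [distinctBoundedGenFun, coeff_genFun, sum_filter]
  refine sum_congr rfl fun π _ ↦ ?_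
  have hcond : (∀ i ∈ π.parts.toFinset, i ≤ p ∧ π.parts.count i = 1)
      ↔ π.parts.Nodup ∧ ∀ i ∈ π.parts, i ≤ p := by
    simp only [Multiset.mem_toFinset, forall_and, Multiset.nodup_iff_count_eq_one, and_comm]
  rw [Finsupp.prod, prod_ite_zero, prod_const]
  simp only [Multiset.toFinsupp_support, Multiset.toFinsupp_apply, hcond]
  split_ifs with h
  · rw [Multiset.toFinset_card_of_nodup h.1]
  · rfl

theorem map_boundedGenFun {S : Type*} [CommRing S] (φ : R →+* S) (w : R) (p : ℕ) :
    map φ (boundedGenFun w p) = boundedGenFun (φ w) p := by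
  simp only [boundedGenFun, map_genFun, apply_ite φ, map_pow, map_zero]

open scoped PowerSeries.WithPiTopology in
theorem boundedGenFun_mul_prod (w : R) (p : ℕ) :
    boundedGenFun w p * ∏ i ∈ range p, (1 - C w * X ^ (i + 1)) = 1 := by
  -- any Hausdorff topology on `R` makes `hasProd_genFun` available
  let _ : TopologicalSpace R := ⊥
  have _ : DiscreteTopology R := ⟨rfl⟩
  have hprod := hasProd_genFun (fun i c ↦ if i ≤ p then w ^ c else 0)
  rw [← boundedGenFun] at hprod
  rw [hprod.unique (hasProd_prod_of_ne_finset_one fun i hi ↦ ?_), ← prod_mul_distrib]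
  · refine prod_eq_one fun i hi ↦ ?_
    have hi : i + 1 ≤ p := by simpa using hi
    have ha : (C w * X ^ (i + 1) : R⟦X⟧).constantCoeff = 0 := by simp
    have hgeom : 1 + ∑' j, (if i + 1 ≤ p then w ^ (j + 1) else 0) • X ^ ((i + 1) * (j + 1))
        = ∑' j, (C w * X ^ (i + 1) : R⟦X⟧) ^ j := by
      rw [(WithPiTopology.summable_pow_of_constantCoeff_eq_zero ha).tsum_eq_zero_add]
      simp [hi, mul_pow, ← pow_mul, smul_eq_C_mul, mul_comm]
    rw [mul_comm, hgeom]
    exact WithPiTopology.one_sub_mul_tsum_pow_of_constantCoeff_eq_zero ha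
  · have : ¬ i + 1 ≤ p := by simpa using hi
    simp [this]

open scoped PowerSeries.WithPiTopology in
theorem distinctBoundedGenFun_eq_prod (w : R) (p : ℕ) :
    distinctBoundedGenFun w p = ∏ i ∈ range p, (1 + C w * X ^ (i + 1)) := by
  let _ : TopologicalSpace R := ⊥
  have _ : DiscreteTopology R := ⟨rfl⟩
  have hprod := hasProd_genFun (fun i c ↦ if i ≤ p ∧ c = 1 then w else 0)
  rw [← distinctBoundedGenFun] at hprod
  refine hprod.unique (hasProd_prod_of_ne_finset_one fun i hi ↦ ?_) |>.trans
    (prod_congr rfl fun i hi ↦ ?_)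
  · have : ¬ i + 1 ≤ p := by simpa using hi
    simp [this]
  · have hi : i + 1 ≤ p := by simpa using hi
    rw [tsum_eq_single 0 (fun j hj ↦ by simp [hj])]
    simp [hi, smul_eq_C_mul]

theorem expand_boundedGenFun_mul_prod (w : R) (p d : ℕ) (hd : d ≠ 0) :
    expand d hd (boundedGenFun w p) * ∏ i ∈ range p, (1 - C w * X ^ (d * (i + 1))) = 1 := by
  simpa [map_prod, expand_C, pow_mul] using congrArg (expand d hd) (boundedGenFun_mul_prod w p)

theorem distinctBoundedGenFun_mul_expand_four (w : R) (p : ℕ) :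
    distinctBoundedGenFun w p * expand 4 four_ne_zero (boundedGenFun (w ^ 4) p)
      = boundedGenFun w p * expand 2 two_ne_zero (boundedGenFun (-w ^ 2) p) := by
  set D₁ := ∏ i ∈ range p, (1 - C w * X ^ (i + 1))
  set D₂ := ∏ i ∈ range p, (1 - C (-w ^ 2) * X ^ (2 * (i + 1)))
  have hright :
      D₁ * D₂ * (boundedGenFun w p * expand 2 two_ne_zero (boundedGenFun (-w ^ 2) p)) = 1 := by
    calc _ = (boundedGenFun w p * D₁) *
            (expand 2 two_ne_zero (boundedGenFun (-w ^ 2) p) * D₂) := by ring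
      _ = 1 := by rw [boundedGenFun_mul_prod, expand_boundedGenFun_mul_prod, one_mul]
  have hleft :
      distinctBoundedGenFun w p * expand 4 four_ne_zero (boundedGenFun (w ^ 4) p) * (D₁ * D₂)
        = 1 := by
    have hD : distinctBoundedGenFun w p * (D₁ * D₂)
        = ∏ i ∈ range p, (1 - C (w ^ 4) * X ^ (4 * (i + 1))) := by
      rw [distinctBoundedGenFun_eq_prod, ← prod_mul_distrib, ← prod_mul_distrib]
      refine prod_congr rfl fun i _ ↦ ?_
      simp only [map_neg, map_pow]
      ring
    rw [mul_right_comm, hD, mul_comm, expand_boundedGenFun_mul_prod]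
  exact left_inv_eq_right_inv hleft hright

theorem coeff_coeff_boundedGenFun_C_mul_X (c : R) (p n m : ℕ) :
    (coeff n (boundedGenFun (Polynomial.C c * Polynomial.X) p)).coeff m = c ^ m * P n m p := by
  simp_rw [coeff_boundedGenFun, Polynomial.finsetSum_coeff, mul_pow, ← map_pow,
    Polynomial.coeff_C_mul_X_pow, ← sum_filter, filter_filter]
  rw [P, Fintype.card_subtype, ← nsmul_eq_mul', ← sum_const]
  refine sum_congr (by ext; simp [and_comm, eq_comm]) fun π hπ ↦ ?_
  rw [(mem_filter.mp hπ).2.1]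

theorem coeff_coeff_boundedGenFun_X (p n m : ℕ) :
    (coeff n (boundedGenFun (Polynomial.X : Polynomial R) p)).coeff m = P n m p := by
  simpa using coeff_coeff_boundedGenFun_C_mul_X (1 : R) p n m

theorem coeff_coeff_distinctBoundedGenFun_X (p n m : ℕ) :
    (coeff n (distinctBoundedGenFun (Polynomial.X : Polynomial R) p)).coeff m = Q n m p := by
  simp_rw [coeff_distinctBoundedGenFun, Polynomial.finsetSum_coeff, Polynomial.coeff_X_pow]
  rw [Q, Fintype.card_subtype, sum_boole, filter_filter]
  congr 2
  ext
  simp [and_comm, eq_comm]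

end GenFun

theorem stmt_8 (n m p : ℕ) :
    ∑ k ∈ Finset.range (n / 4 + 1), ∑ l ∈ Finset.range (m / 4 + 1),
      ((Q (n - 4 * k) (m - 4 * l) p : ℤ) * P k l p)
    = ∑ k ∈ Finset.range (n / 2 + 1), ∑ l ∈ Finset.range (m / 2 + 1),
      (-1 : ℤ) ^ l * P (n - 2 * k) (m - 2 * l) p * P k l p := by
  have h4 : boundedGenFun (Polynomial.X ^ 4 : Polynomial ℤ) p
      = map (Polynomial.expand ℤ 4).toRingHom (boundedGenFun Polynomial.X p) := by
    simp [map_boundedGenFun]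
  have h2 : boundedGenFun (-Polynomial.X ^ 2 : Polynomial ℤ) p
      = map (Polynomial.expand ℤ 2).toRingHom
          (boundedGenFun (Polynomial.C (-1) * Polynomial.X) p) := by
    simp [map_boundedGenFun]
  have key := congrArg (fun F ↦ (coeff n F).coeff m)
    (distinctBoundedGenFun_mul_expand_four (Polynomial.X : Polynomial ℤ) p)
  simp only [h4, h2, coeff_coeff_mul_expand_map_expand, coeff_coeff_distinctBoundedGenFun_X,
    coeff_coeff_boundedGenFun_X, coeff_coeff_boundedGenFun_C_mul_X] at key
  rw [key]
  exact sum_congr rfl fun k _ ↦ sum_congr rfl fun l _ ↦ by ring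
end

section
/- For all nonnegative integers n, m, p: Σ_{k=0}^{n} Σ_{l=0}^{m} (−1)^l · P(n−k, m−l, p) · Q(k, l, p) = 1 if n = 0 and m = 0, and = 0 otherwise. -/
theorem Multiset.notMem_and_forall_le_succ_iff {s : Multiset ℕ} {p : ℕ} :
    (p + 1 ∉ s ∧ ∀ i ∈ s, i ≤ p + 1) ↔ ∀ i ∈ s, i ≤ p := by
  refine ⟨fun ⟨hp, hle⟩ i hi => ?_,
    fun hle => ⟨fun hp => ?_, fun i hi => (hle i hi).trans p.le_succ⟩⟩
  · have : i ≠ p + 1 := by rintro rfl; exact hp hi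
    have := hle i hi
    omega
  · have := hle _ hp
    omega

namespace Nat.Partition

theorem card_subtype_of_forall_mem_nonpos {n : ℕ} (R : Multiset ℕ → Prop) [DecidablePred R]
    (hR : ∀ s, R s → ∀ i ∈ s, i ≤ 0) :
    Fintype.card {π : n.Partition // R π.parts} = if n = 0 ∧ R 0 then 1 else 0 := by
  split_ifs with h
  · obtain ⟨rfl, h0⟩ := h
    exact Fintype.card_eq_one_iff.mpr
      ⟨⟨default, by simpa using h0⟩, fun π => Subtype.ext (Subsingleton.elim _ _)⟩
  · refine Fintype.card_eq_zero_iff.mpr ⟨fun ⟨π, hπ⟩ => h ?_⟩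
    have hparts : π.parts = 0 := Multiset.eq_zero_of_forall_notMem fun i hi =>
      (π.parts_pos hi).not_ge (hR _ hπ i hi)
    exact ⟨by simpa [hparts] using π.parts_sum.symm, hparts ▸ hπ⟩

theorem card_subtype_eq_card_notMem_add {n a : ℕ} (ha : 1 ≤ a) (R : Multiset ℕ → Prop)
    [DecidablePred R] :
    Fintype.card {π : n.Partition // R π.parts} =
      Fintype.card {π : n.Partition // a ∉ π.parts ∧ R π.parts} +
        if a ≤ n then Fintype.card {σ : (n - a).Partition // R (a ::ₘ σ.parts)} else 0 := by
  have hsplit : Fintype.card {π : n.Partition // R π.parts} =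
      Fintype.card {π : n.Partition // a ∉ π.parts ∧ R π.parts} +
        Fintype.card {π : n.Partition // a ∈ π.parts ∧ R π.parts} := by
    rw [← Fintype.card_subtype_or_disjoint _ _
      fun _ h₁ h₂ π hπ => (h₁ π hπ).1 (h₂ π hπ).1]
    exact Fintype.card_congr (Equiv.subtypeEquivRight fun π => by tauto)
  rw [hsplit]
  congr 1
  split_ifs with han
  · exact Fintype.card_congr <| (Equiv.subtypeSubtypeEquivSubtypeInter _ _).symm.trans <|
      (partitionWithPartEquiv ha han).subtypeEquiv fun π => by
        simp [Multiset.cons_erase π.2]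
  · exact Fintype.card_eq_zero_iff.mpr ⟨fun π => han (le_of_mem_parts π.2.1)⟩

end Nat.Partition

theorem P_zero (n m : ℕ) : P n m 0 = if n = 0 ∧ m = 0 then 1 else 0 := by
  rw [P, Nat.Partition.card_subtype_of_forall_mem_nonpos (fun s => s.card = m ∧ ∀ i ∈ s, i ≤ 0)
    fun _ h => h.2]
  simp [eq_comm]

theorem Q_zero (n m : ℕ) : Q n m 0 = if n = 0 ∧ m = 0 then 1 else 0 := by
  rw [Q, Nat.Partition.card_subtype_of_forall_mem_nonpos
    (fun s => s.card = m ∧ s.Nodup ∧ ∀ i ∈ s, i ≤ 0) fun _ h => h.2.2]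
  simp [eq_comm]

theorem P_succ (n m p : ℕ) :
    P n m (p + 1) = P n m p + if p + 1 ≤ n ∧ 1 ≤ m then P (n - (p + 1)) (m - 1) (p + 1) else 0 := by
  rw [ite_and, P, Nat.Partition.card_subtype_eq_card_notMem_add (a := p + 1) le_add_self
    fun s => s.card = m ∧ ∀ i ∈ s, i ≤ p + 1]
  congr 1
  · exact Fintype.card_congr <| Equiv.subtypeEquivRight fun π => by
      rw [← Multiset.notMem_and_forall_le_succ_iff (p := p)]
      tauto
  · rcases m with _ | m
    · simp
    · simp [P]

theorem Q_succ (n m p : ℕ) :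
    Q n m (p + 1) = Q n m p + if p + 1 ≤ n ∧ 1 ≤ m then Q (n - (p + 1)) (m - 1) p else 0 := by
  rw [ite_and, Q, Nat.Partition.card_subtype_eq_card_notMem_add (a := p + 1) le_add_self
    fun s => s.card = m ∧ s.Nodup ∧ ∀ i ∈ s, i ≤ p + 1]
  congr 1
  · exact Fintype.card_congr <| Equiv.subtypeEquivRight fun π => by
      rw [← Multiset.notMem_and_forall_le_succ_iff (p := p)]
      tauto
  · rcases m with _ | m
    · simp
    · simp only [le_add_iff_nonneg_left, zero_le, if_true, add_tsub_cancel_right]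
      refine if_congr Iff.rfl (Fintype.card_congr <| Equiv.subtypeEquivRight fun σ => ?_) rfl
      rw [← Multiset.notMem_and_forall_le_succ_iff (p := p)]
      simp only [Multiset.card_cons, Multiset.nodup_cons, Multiset.forall_mem_cons,
        add_left_inj, le_refl, true_and]
      tauto

open Finset PowerSeries

theorem PowerSeries.coeff_coeff_X_pow_mul_C_X_mul {R : Type*} [CommSemiring R] (F : R⟦X⟧⟦X⟧)
    (d n m : ℕ) :
    coeff m (coeff n (X ^ d * C X * F)) =
      if d ≤ n ∧ 1 ≤ m then coeff (m - 1) (coeff (n - d) F) else 0 := by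
  rw [mul_assoc, coeff_X_pow_mul']
  rcases m with _ | m <;> split_ifs <;> simp_all [coeff_C_mul, coeff_succ_X_mul]

theorem PowerSeries.coeff_coeff_mul {R : Type*} [CommSemiring R] (F G : R⟦X⟧⟦X⟧) (n m : ℕ) :
    coeff m (coeff n (F * G)) = ∑ k ∈ range (n + 1), ∑ l ∈ range (m + 1),
      coeff (m - l) (coeff (n - k) F) * coeff l (coeff k G) := by
  rw [mul_comm, coeff_mul, map_sum,
    Nat.sum_antidiagonal_eq_sum_range_succ fun i j => coeff m (coeff i G * coeff j F)]
  refine sum_congr rfl fun k _ => ?_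
  rw [coeff_mul, Nat.sum_antidiagonal_eq_sum_range_succ
    fun i j => coeff i (coeff k G) * coeff j (coeff (n - k) F)]
  exact sum_congr rfl fun l _ => mul_comm _ _

theorem PowerSeries.coeff_coeff_one {R : Type*} [CommSemiring R] (n m : ℕ) :
    coeff m (coeff n (1 : R⟦X⟧⟦X⟧)) = if n = 0 ∧ m = 0 then 1 else 0 := by
  rw [coeff_one, apply_ite (coeff m), coeff_one, map_zero, ite_and]

-- The outer variable `x` records the size of a partition, the inner one `y` its number of parts.
noncomputable def genFunP (p : ℕ) : ℤ⟦X⟧⟦X⟧ :=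
  mk fun n => mk fun m => (P n m p : ℤ)

noncomputable def genFunQ (p : ℕ) : ℤ⟦X⟧⟦X⟧ :=
  mk fun n => mk fun m => (-1) ^ m * (Q n m p : ℤ)

theorem genFunP_zero : genFunP 0 = 1 := by
  ext n m
  rw [genFunP, coeff_mk, coeff_mk, P_zero, coeff_coeff_one, Nat.cast_ite, Nat.cast_one,
    Nat.cast_zero]

theorem genFunQ_zero : genFunQ 0 = 1 := by
  ext n m
  rw [genFunQ, coeff_mk, coeff_mk, Q_zero, coeff_coeff_one]
  split_ifs with h
  · simp [h.2]
  · simp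

theorem mul_genFunP_succ (p : ℕ) : (1 - X ^ (p + 1) * C X) * genFunP (p + 1) = genFunP p := by
  ext n m
  rw [sub_mul, one_mul, map_sub, map_sub, coeff_coeff_X_pow_mul_C_X_mul]
  simp only [genFunP, coeff_mk]
  rw [P_succ]
  split_ifs <;> push_cast <;> ring

theorem genFunQ_succ (p : ℕ) : genFunQ (p + 1) = (1 - X ^ (p + 1) * C X) * genFunQ p := by
  ext n m
  rw [sub_mul, one_mul, map_sub, map_sub, coeff_coeff_X_pow_mul_C_X_mul]
  simp only [genFunQ, coeff_mk]
  rw [Q_succ]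
  split_ifs with h
  · obtain ⟨m, rfl⟩ := Nat.exists_eq_add_of_le' h.2
    push_cast
    ring
  · push_cast
    ring

theorem genFunP_mul_genFunQ (p : ℕ) : genFunP p * genFunQ p = 1 := by
  induction p with
  | zero => rw [genFunP_zero, genFunQ_zero, one_mul]
  | succ p ih => rw [genFunQ_succ, ← mul_assoc, mul_comm (genFunP _), mul_genFunP_succ, ih]

theorem stmt_10 (n m p : ℕ) :
    ∑ k ∈ Finset.range (n + 1), ∑ l ∈ Finset.range (m + 1),
      (-1 : ℤ) ^ l * P (n - k) (m - l) p * Q k l p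
    = if n = 0 ∧ m = 0 then 1 else 0 := by
  calc _ = coeff m (coeff n (genFunP p * genFunQ p)) := by
        rw [coeff_coeff_mul]
        refine sum_congr rfl fun k _ => sum_congr rfl fun l _ => ?_
        rw [genFunP, genFunQ, coeff_mk, coeff_mk, coeff_mk, coeff_mk]
        ring
    _ = _ := by rw [genFunP_mul_genFunQ, coeff_coeff_one]
end

section
/- For all nonnegative integers n and m, the following identity holds in ℚ(q): Σ_{k=0}^{n} (−1)^k · q^{C(k,2)} · [m+n−k choose m]_q · [m+1 choose k]_q = 1 if n = 0, and = 0 if n > 0. -/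
/-!
By the q-binomial theorem, `∏_{i=0}^{m} (1 - q^i t) = ∑_k (-1)^k q^{C(k,2)} [m+1 choose k] t^k`
in `ℚ(q)⟦t⟧`, and `∑_j [m+j choose m] t^j` is the inverse of this product: multiplying it by
`1 - q^m t` gives, by Pascal's rule, the series for `m - 1`, and for `m = 0` it is `1 / (1 - t)`.
The sum is the `n`-th coefficient of the product of these two series.
-/

/-- The Gaussian (q-)binomial coefficient `[a choose b]` with parameter `x`,
`∏_{j=1}^{b} (1 - x^{a-b+j})/(1 - x^j)`, an element of `ℚ(q)` when `x = q`;
it is zero when `b > a`. -/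
noncomputable def qbinom (x : RatFunc ℚ) (a b : ℕ) : RatFunc ℚ :=
  if b ≤ a then ∏ j ∈ Finset.range b, (1 - x ^ (a - b + j + 1)) / (1 - x ^ (j + 1)) else 0

/-- The indeterminate `q` of the field of rational functions `ℚ(q)`. -/
noncomputable def q : RatFunc ℚ := RatFunc.X

open Finset PowerSeries

-- `(x; x)_n`
noncomputable def qPochhammer (x : RatFunc ℚ) (n : ℕ) : RatFunc ℚ :=
  ∏ j ∈ range n, (1 - x ^ (j + 1))

lemma qPochhammer_zero (x : RatFunc ℚ) : qPochhammer x 0 = 1 :=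
  prod_range_zero _

lemma qPochhammer_succ (x : RatFunc ℚ) (n : ℕ) :
    qPochhammer x (n + 1) = qPochhammer x n * (1 - x ^ (n + 1)) :=
  prod_range_succ _ _

lemma qPochhammer_ne_zero {x : RatFunc ℚ} (hx : ∀ j, x ^ (j + 1) ≠ 1) (n : ℕ) :
    qPochhammer x n ≠ 0 :=
  prod_ne_zero_iff.mpr fun j _ => sub_ne_zero.mpr (hx j).symm

lemma qbinom_of_lt (x : RatFunc ℚ) {a b : ℕ} (h : a < b) : qbinom x a b = 0 := by
  rw [qbinom, if_neg (by omega)]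

lemma qbinom_zero_right (x : RatFunc ℚ) (a : ℕ) : qbinom x a 0 = 1 := by
  simp [qbinom]

lemma qbinom_add_left {x : RatFunc ℚ} (hx : ∀ j, x ^ (j + 1) ≠ 1) (b c : ℕ) :
    qbinom x (b + c) b = qPochhammer x (b + c) / (qPochhammer x b * qPochhammer x c) := by
  have hsplit : qPochhammer x (b + c) = qPochhammer x c * ∏ j ∈ range b, (1 - x ^ (c + j + 1)) := by
    rw [add_comm, qPochhammer, prod_range_add]
    simp only [qPochhammer, add_assoc]
  rw [qbinom, if_pos (Nat.le_add_right b c), prod_div_distrib, Nat.add_sub_cancel_left, hsplit,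
    ← qPochhammer, mul_comm (qPochhammer x b), mul_div_mul_left _ _ (qPochhammer_ne_zero hx c)]

lemma qbinom_self {x : RatFunc ℚ} (hx : ∀ j, x ^ (j + 1) ≠ 1) (a : ℕ) : qbinom x a a = 1 := by
  have h := qbinom_add_left hx a 0
  rwa [add_zero, qPochhammer_zero, mul_one, div_self (qPochhammer_ne_zero hx a)] at h

lemma qbinom_add_comm {x : RatFunc ℚ} (hx : ∀ j, x ^ (j + 1) ≠ 1) (b c : ℕ) :
    qbinom x (b + c) b = qbinom x (b + c) c := by
  rw [qbinom_add_left hx, add_comm b c, qbinom_add_left hx, mul_comm]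

theorem qbinom_succ_succ {x : RatFunc ℚ} (hx : ∀ j, x ^ (j + 1) ≠ 1) (b c : ℕ) :
    qbinom x (b + c + 1) (b + 1) = qbinom x (b + c) b + x ^ (b + 1) * qbinom x (b + c) (b + 1) := by
  rcases c with _ | c
  · simp [qbinom_self hx, qbinom_of_lt]
  rw [show b + (c + 1) + 1 = (b + 1) + (c + 1) by ring, qbinom_add_left hx,
    qbinom_add_left hx, show b + (c + 1) = (b + 1) + c by ring, qbinom_add_left hx,
    show b + 1 + (c + 1) = (b + 1 + c) + 1 by ring, qPochhammer_succ x (b + 1 + c),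
    qPochhammer_succ x b, qPochhammer_succ x c]
  have hb := sub_ne_zero.mpr (hx b).symm
  have hc := sub_ne_zero.mpr (hx c).symm
  have := qPochhammer_ne_zero hx
  field_simp
  ring

theorem qbinom_succ_succ' {x : RatFunc ℚ} (hx : ∀ j, x ^ (j + 1) ≠ 1) (b c : ℕ) :
    qbinom x (b + c + 1) (b + 1) = qbinom x (b + c) (b + 1) + x ^ c * qbinom x (b + c) b := by
  rcases c with _ | c
  · simp [qbinom_self hx, qbinom_of_lt]
  have e1 : qbinom x (b + (c + 1) + 1) (b + 1) = qbinom x (c + (b + 1) + 1) (c + 1) := by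
    rw [show b + (c + 1) + 1 = (c + 1) + (b + 1) by ring, ← qbinom_add_comm hx,
      show (c + 1) + (b + 1) = c + (b + 1) + 1 by ring]
  have e2 : qbinom x (b + (c + 1)) (b + 1) = qbinom x (c + (b + 1)) c := by
    rw [show b + (c + 1) = (b + 1) + c by ring, qbinom_add_comm hx, add_comm]
  have e3 : qbinom x (b + (c + 1)) b = qbinom x (c + (b + 1)) (c + 1) := by
    rw [qbinom_add_comm hx, show b + (c + 1) = c + (b + 1) by ring]
  rw [e1, e2, e3, qbinom_succ_succ hx c (b + 1), add_comm]

section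

variable {R : Type*} [CommRing R]

lemma coeff_zero_mul_one_sub_C_mul_X (f : R⟦X⟧) (c : R) :
    coeff 0 (f * (1 - C c * X)) = coeff 0 f := by
  simp [mul_sub, ← mul_assoc]

lemma coeff_succ_mul_one_sub_C_mul_X (f : R⟦X⟧) (c : R) (n : ℕ) :
    coeff (n + 1) (f * (1 - C c * X)) = coeff (n + 1) f - c * coeff n f := by
  rw [mul_sub, mul_one, map_sub, ← mul_assoc, coeff_succ_mul_X, coeff_mul_C, mul_comm (coeff n f)]

end

theorem coeff_prod_one_sub_C_pow_mul_X {x : RatFunc ℚ} (hx : ∀ j, x ^ (j + 1) ≠ 1) (m k : ℕ) :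
    coeff k (∏ i ∈ range m, (1 - C (x ^ i) * X)) = (-1) ^ k * x ^ k.choose 2 * qbinom x m k := by
  induction m generalizing k with
  | zero =>
    rcases k with _ | k
    · simp [qbinom_zero_right]
    · simp [coeff_one, qbinom_of_lt]
  | succ m ih =>
    rw [prod_range_succ]
    rcases k with _ | k
    · rw [coeff_zero_mul_one_sub_C_mul_X, ih, qbinom_zero_right, qbinom_zero_right]
    rw [coeff_succ_mul_one_sub_C_mul_X, ih, ih]
    have hchoose : (k + 1).choose 2 = k.choose 2 + k := by
      rw [Nat.choose_succ_succ', Nat.choose_one_right, add_comm]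
    rcases le_or_gt k m with hkm | hkm
    · obtain ⟨c, rfl⟩ := Nat.exists_eq_add_of_le hkm
      rw [qbinom_succ_succ' hx k c, hchoose]
      ring
    · rw [qbinom_of_lt x hkm, qbinom_of_lt x (by omega : m < k + 1),
        qbinom_of_lt x (by omega : m + 1 < k + 1)]
      ring

noncomputable def qbinomSeries (x : RatFunc ℚ) (m : ℕ) : (RatFunc ℚ)⟦X⟧ :=
  mk fun j => qbinom x (m + j) m

lemma qbinomSeries_succ_mul {x : RatFunc ℚ} (hx : ∀ j, x ^ (j + 1) ≠ 1) (m : ℕ) :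
    qbinomSeries x (m + 1) * (1 - C (x ^ (m + 1)) * X) = qbinomSeries x m := by
  ext (_ | j)
  · rw [coeff_zero_mul_one_sub_C_mul_X]
    simp [qbinomSeries, qbinom_self hx]
  · rw [coeff_succ_mul_one_sub_C_mul_X]
    simp only [qbinomSeries, coeff_mk]
    rw [show m + 1 + (j + 1) = m + (j + 1) + 1 by ring, qbinom_succ_succ hx m (j + 1),
      show m + 1 + j = m + (j + 1) by ring]
    ring

theorem qbinomSeries_mul_prod {x : RatFunc ℚ} (hx : ∀ j, x ^ (j + 1) ≠ 1) (m : ℕ) :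
    qbinomSeries x m * ∏ i ∈ range (m + 1), (1 - C (x ^ i) * X) = 1 := by
  induction m with
  | zero =>
    have h : qbinomSeries x 0 = PowerSeries.mk 1 := by ext; simp [qbinomSeries, qbinom_zero_right]
    simpa [h] using mk_one_mul_one_sub_eq_one (RatFunc ℚ)
  | succ m ih =>
    calc _ = qbinomSeries x (m + 1) * (1 - C (x ^ (m + 1)) * X) *
          ∏ i ∈ range (m + 1), (1 - C (x ^ i) * X) := by
          rw [prod_range_succ]; ring
      _ = 1 := by rw [qbinomSeries_succ_mul hx, ih]

lemma q_pow_succ_ne_one (j : ℕ) : q ^ (j + 1) ≠ 1 := by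
  rw [q, ← RatFunc.algebraMap_X, ← map_pow, Ne, ← map_one (algebraMap (Polynomial ℚ) (RatFunc ℚ)),
    (RatFunc.algebraMap_injective ℚ).eq_iff]
  exact fun h => by simpa using congrArg Polynomial.natDegree h

theorem stmt_11 (n m : ℕ) :
    ∑ k ∈ Finset.range (n + 1),
      (-1 : RatFunc ℚ) ^ k * q ^ Nat.choose k 2 * qbinom q (m + n - k) m * qbinom q (m + 1) k
    = if n = 0 then 1 else 0 := by
  have h := congrArg (coeff n) (qbinomSeries_mul_prod q_pow_succ_ne_one m)
  rw [mul_comm, coeff_mul, Nat.sum_antidiagonal_eq_sum_range_succ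
    (fun a b => coeff a (∏ i ∈ range (m + 1), (1 - C (q ^ i) * X)) * coeff b (qbinomSeries q m)),
    coeff_one] at h
  rw [← h]
  refine sum_congr rfl fun k hk => ?_
  rw [coeff_prod_one_sub_C_pow_mul_X q_pow_succ_ne_one, qbinomSeries, coeff_mk,
    Nat.add_sub_assoc (Nat.lt_succ_iff.mp (mem_range.mp hk))]
  ring
end
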